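/- arXiv:2504.10290 — 3 statements merged into one kernel-verified Lean document; each statement's English description precedes it below -/
import Mathlib

section
/- Let Δ ≥ ω ≥ u+1 ≥ 2 and let L = T_ω(Δ + u·⌊Δ/(ω−u)⌋). Then for every u-clique c in L, the set of common neighbors of the vertices of c has at most Δ elements; equivalently, L contains no copy of the complete split graph K_u ∨ I_{Δ+1}. -/
open SimpleGraph Finset Filter Topology

/-- `F` is contained in `G` as a subgraph: there is an injective graph homomorphism. -/
def Graph.Contains {β α : Type*} (F : SimpleGraph β) (G : SimpleGraph α) : Prop :=
  ∃ f : F →g G, Function.Injective f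

/-- The number of subgraphs of `G` isomorphic to `H`. -/
noncomputable def copyCount {β α : Type*} (H : SimpleGraph β) (G : SimpleGraph α) : ℕ :=
  {J : G.Subgraph | Nonempty (J.coe ≃g H)}.ncard

/-- The number of `u`-cliques of `G`. -/
noncomputable def kclique {α : Type*} (u : ℕ) (G : SimpleGraph α) : ℕ :=
  {s : Finset α | G.IsNClique u s}.ncard

/-- The set of dominating vertices of a graph. -/
def domSet {α : Type*} (H : SimpleGraph α) : Set α := {v | ∀ w, w ≠ v → H.Adj v w}

/-- The number of dominating vertices of a graph. -/
noncomputable def domCount {α : Type*} (H : SimpleGraph α) : ℕ := (domSet H).ncard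

/-- The set of dominating vertices of a subgraph `J`: vertices of `J` adjacent in `J`
to all other vertices of `J`. -/
def subDomSet {α : Type*} {G : SimpleGraph α} (J : G.Subgraph) : Set α :=
  {v ∈ J.verts | ∀ w ∈ J.verts, w ≠ v → J.Adj v w}

/-- The common neighborhood of a finite vertex set `c` in `G`. -/
def commonNbhd {α : Type*} (G : SimpleGraph α) (c : Finset α) : Set α :=
  {v | ∀ x ∈ c, G.Adj x v}

/-- `ω(c)`: the size of a largest clique of `G` containing `c`. -/
noncomputable def omegaC {α : Type*} (G : SimpleGraph α) (c : Finset α) : ℕ :=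
  sSup {m | ∃ s : Finset α, c ⊆ s ∧ G.IsNClique m s}

/-- `Δ(c)`: the number of common neighbors of `c` in `G`. -/
noncomputable def deltaC {α : Type*} (G : SimpleGraph α) (c : Finset α) : ℕ :=
  (commonNbhd G c).ncard

/-- `ω(J)`: the max of `ω(c)` over `u`-sets `c` of dominating vertices of the subgraph `J`. -/
noncomputable def omegaJ {α : Type*} (G : SimpleGraph α) (u : ℕ) (J : G.Subgraph) : ℕ :=
  sSup {m | ∃ c : Finset α, ↑c ⊆ subDomSet J ∧ c.card = u ∧ m = omegaC G c}

/-- `Δ(J)`: the max of `Δ(c)` over `u`-sets `c` of dominating vertices of the subgraph `J`. -/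
noncomputable def deltaJ {α : Type*} (G : SimpleGraph α) (u : ℕ) (J : G.Subgraph) : ℕ :=
  sSup {m | ∃ c : Finset α, ↑c ⊆ subDomSet J ∧ c.card = u ∧ m = deltaC G c}

/-- The complete split graph `K_u ∨ I_d`. -/
def completeSplitGraph (u d : ℕ) : SimpleGraph (Fin u ⊕ Fin d) where
  Adj x y := x ≠ y ∧ (x.isLeft ∨ y.isLeft)
  symm := ⟨by rintro x y ⟨h1, h2⟩; exact ⟨h1.symm, h2.symm⟩⟩
  loopless := ⟨by rintro x ⟨h, -⟩; exact h rfl⟩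

/-- Disjoint union of a family of graphs. -/
def sigmaGraph {ι : Type*} {β : ι → Type*} (G : ∀ i, SimpleGraph (β i)) :
    SimpleGraph (Σ i, β i) where
  Adj x y := ∃ (i : ι) (a b : β i), x = ⟨i, a⟩ ∧ y = ⟨i, b⟩ ∧ (G i).Adj a b
  symm := ⟨by rintro x y ⟨i, a, b, rfl, rfl, hab⟩; exact ⟨i, b, a, rfl, rfl, hab.symm⟩⟩
  loopless := ⟨by
    rintro x ⟨i, a, b, rfl, h2, hab⟩
    injection h2 with h1 h2'
    exact hab.ne h2'⟩

/-- `ex_u(p, H, F)`: maximum number of copies of `H` in an `F`-free graph with exactly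
`p` `u`-cliques (graphs taken on `Fin n` for some `n`). -/
noncomputable def exu {ι : Type*} {β : ι → Type*} (u p : ℕ) {h : ℕ} (H : SimpleGraph (Fin h))
    (F : ∀ i, SimpleGraph (β i)) : ℕ :=
  sSup {N | ∃ (n : ℕ) (G : SimpleGraph (Fin n)),
    (∀ i, ¬ Graph.Contains (F i) G) ∧ kclique u G = p ∧ _root_.copyCount H G = N}

/-! In `T_r(n)` the vertices of a `u`-clique `c` lie in `u` distinct parts, each with at least
`⌊n/r⌋` vertices, and no vertex of these parts is a common neighbour of `c`; so `c` has at most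
`n - u⌊n/r⌋` common neighbours. For `n = Δ + u⌊Δ/(ω-u)⌋` and `r = ω` one has
`⌊Δ/(ω-u)⌋ ≤ ⌊n/ω⌋`, which gives the bound `Δ`. -/

lemma Nat.div_sub_le_add_mul_div_sub_div (a b c : ℕ) :
    a / (b - c) ≤ (a + c * (a / (b - c))) / b := by
  rcases Nat.eq_zero_or_pos (b - c) with h | h
  · simp [h]
  rw [Nat.le_div_iff_mul_le (by omega)]
  have hq : a / (b - c) * (b - c) ≤ a := Nat.div_mul_le_self a (b - c)
  calc a / (b - c) * b = a / (b - c) * (b - c) + c * (a / (b - c)) := by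
        rw [Nat.mul_comm c, ← Nat.mul_add, Nat.sub_add_cancel (by omega)]
    _ ≤ a + c * (a / (b - c)) := Nat.add_le_add_right hq _

lemma Nat.mod_add_mul_lt {n r a k : ℕ} (hk : k < n / r) : a % r + k * r < n := by
  have hr : 0 < r := Nat.pos_of_ne_zero fun h => by simp [h] at hk
  calc a % r + k * r < r + k * r := Nat.add_lt_add_right (a.mod_lt hr) _
    _ = (k + 1) * r := by ring
    _ ≤ n / r * r := Nat.mul_le_mul_right r hk
    _ ≤ n := Nat.div_mul_le_self n r

/-- The injection `(x, k) ↦ x % r + k r` sends `c × [0, ⌊n/r⌋)` into the parts of the vertices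
of `c`, which are disjoint from the common neighbourhood of `c`. -/
theorem ncard_commonNbhd_turanGraph_add_card_mul_le {n r : ℕ} {c : Finset (Fin n)}
    (hc : (turanGraph n r).IsClique (c : Set (Fin n))) :
    (commonNbhd (turanGraph n r) c).ncard + #c * (n / r) ≤ n := by
  classical
  set N := (commonNbhd (turanGraph n r) c).toFinset.map Fin.valEmbedding
  set S := (c ×ˢ range (n / r)).image fun p => (p.1 : ℕ) % r + p.2 * r
  have hS : #S = #c * (n / r) := by
    rw [card_image_of_injOn, card_product, card_range]
    rintro ⟨x, k⟩ hp ⟨y, l⟩ hq hxy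
    simp only [coe_product, coe_range, Set.mem_prod, Set.mem_Iio, mem_coe] at hp hq hxy
    have hr : 0 < r := Nat.pos_of_ne_zero fun h => by simp [h] at hp
    have hxy_mod : (x : ℕ) % r = y % r := by
      simpa using congrArg (· % r) hxy
    obtain rfl : x = y := by
      by_contra hne
      exact hc hp.1 hq.1 hne hxy_mod
    simp only [Prod.mk.injEq, true_and]
    exact Nat.eq_of_mul_eq_mul_right hr (by omega)
  have hdisj : Disjoint N S := by
    rw [Finset.disjoint_left]
    rintro _ hN hS
    simp only [N, S, Finset.mem_map, Set.mem_toFinset, mem_image, mem_product] at hN hS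
    obtain ⟨v, hv, rfl⟩ := hN
    obtain ⟨⟨x, k⟩, ⟨hx, -⟩, hxv⟩ := hS
    refine hv x hx ?_
    simp only [Fin.valEmbedding_apply] at hxv
    simp [← hxv]
  have hsub : N ∪ S ⊆ range n := by
    refine union_subset ?_ ?_ <;> intro _ <;>
      simp only [N, S, Finset.mem_map, mem_image, mem_product, mem_range]
    · rintro ⟨v, -, rfl⟩
      exact v.2
    · rintro ⟨⟨x, k⟩, ⟨-, hk⟩, rfl⟩
      exact Nat.mod_add_mul_lt hk
  calc (commonNbhd (turanGraph n r) c).ncard + #c * (n / r) = #N + #S := by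
        rw [hS, card_map, Set.ncard_eq_toFinset_card']
    _ = #(N ∪ S) := (card_union_of_disjoint hdisj).symm
    _ ≤ n := by simpa using card_le_card hsub

theorem Graph.Contains.exists_isNClique_le_ncard_commonNbhd {α : Type*} [Finite α]
    {G : SimpleGraph α} {u d : ℕ} (h : Graph.Contains (completeSplitGraph u d) G) :
    ∃ c : Finset α, G.IsNClique u c ∧ d ≤ (commonNbhd G c).ncard := by
  obtain ⟨f, hf⟩ := h
  have hl : Function.Injective (f ∘ Sum.inl) := hf.comp Sum.inl_injective
  have hr : Function.Injective (f ∘ Sum.inr) := hf.comp Sum.inr_injective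
  refine ⟨univ.map ⟨_, hl⟩, ⟨?_, by simp⟩, ?_⟩
  · simp only [coe_map, coe_univ, Set.image_univ]
    rintro _ ⟨i, rfl⟩ _ ⟨j, rfl⟩ hij
    exact f.map_adj ⟨fun h => hij (congrArg _ (Sum.inl_injective h)), Or.inl rfl⟩
  · calc d = (Set.range (f ∘ Sum.inr)).ncard := by
          rw [Set.ncard_range_of_injective hr, Nat.card_eq_fintype_card, Fintype.card_fin]
      _ ≤ (commonNbhd G _).ncard := by
          refine Set.ncard_le_ncard ?_
          rintro _ ⟨j, rfl⟩ _ hx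
          simp only [Function.Embedding.coeFn_mk, Finset.mem_map, mem_univ, true_and] at hx
          obtain ⟨i, rfl⟩ := hx
          exact f.map_adj ⟨by simp, Or.inl rfl⟩

theorem stmt5_general (u Δ ω : ℕ) :
    (∀ c : Finset (Fin (Δ + u * (Δ / (ω - u)))),
      (turanGraph (Δ + u * (Δ / (ω - u))) ω).IsNClique u c →
        (commonNbhd (turanGraph (Δ + u * (Δ / (ω - u))) ω) c).ncard ≤ Δ) ∧
    ¬ Graph.Contains (completeSplitGraph u (Δ + 1))
      (turanGraph (Δ + u * (Δ / (ω - u))) ω) := by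
  set n := Δ + u * (Δ / (ω - u))
  have hbound : ∀ c : Finset (Fin n), (turanGraph n ω).IsNClique u c →
      (commonNbhd (turanGraph n ω) c).ncard ≤ Δ := by
    intro c hc
    have hcount := ncard_commonNbhd_turanGraph_add_card_mul_le hc.isClique
    have hparts := Nat.mul_le_mul_left u (Nat.div_sub_le_add_mul_div_sub_div Δ ω u)
    rw [hc.card_eq] at hcount
    simp only [n] at hcount ⊢
    linarith
  refine ⟨hbound, fun hL => ?_⟩
  obtain ⟨c, hc, hd⟩ := hL.exists_isNClique_le_ncard_commonNbhd
  exact (hbound c hc).not_gt hd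

/-- in `L = T_ω(Δ + u⌊Δ/(ω−u)⌋)`, every `u`-clique has at most `Δ`
common neighbors; equivalently `L` contains no `K_u ∨ I_{Δ+1}`. -/
theorem stmt5 (u Δ ω : ℕ) (hu : 1 ≤ u) (hω : u + 1 ≤ ω) (hΔ : ω ≤ Δ) :
    (∀ c : Finset (Fin (Δ + u * (Δ / (ω - u)))),
      (turanGraph (Δ + u * (Δ / (ω - u))) ω).IsNClique u c →
        (commonNbhd (turanGraph (Δ + u * (Δ / (ω - u))) ω) c).ncard ≤ Δ) ∧
    ¬ Graph.Contains (completeSplitGraph u (Δ + 1))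
      (turanGraph (Δ + u * (Δ / (ω - u))) ω) :=
  stmt5_general u Δ ω
end

section
/- In the Turán graph T_ω(n) where ω divides n (so all parts have equal size n/ω), for every u-clique c (with u ≤ ω), the subgraph induced on the common neighborhood of c is isomorphic to T_{ω−u}(n − un/ω). -/
open SimpleGraph Finset Filter Topology

/-! Transport along `T_ω(ωk) ≃g K_ω(k)` (`completeEquipartiteGraph`), whose vertices are pairs
(part, index). A `u`-clique meets `u` distinct parts, and its common neighbourhood is the union of
the other `ω - u` parts, which induces `K_{ω-u}(k) ≃g T_{ω-u}((ω-u)k)`. -/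

namespace SimpleGraph

variable {V W : Type*} {G : SimpleGraph V} {H : SimpleGraph W}

theorem Iso.isNClique_map (φ : G ≃g H) {n : ℕ} {s : Finset V} (hs : G.IsNClique n s) :
    H.IsNClique n (s.map φ.toEquiv.toEmbedding) := by
  refine ⟨?_, by rw [card_map, hs.card_eq]⟩
  rw [coe_map]
  rintro _ ⟨x, hx, rfl⟩ _ ⟨y, hy, rfl⟩ hxy
  exact φ.map_adj_iff.2 (hs.isClique hx hy (ne_of_apply_ne _ hxy))

theorem Iso.bijOn_commonNbhd (φ : G ≃g H) (c : Finset V) :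
    Set.BijOn φ (commonNbhd G c) (commonNbhd H (c.map φ.toEquiv.toEmbedding)) :=
  φ.toEquiv.bijOn fun v => by
    simp only [commonNbhd, Set.mem_ofPred_eq, forall_mem_map]
    exact forall₂_congr fun _ _ => φ.map_adj_iff

variable {r t : ℕ}

namespace completeEquipartiteGraph

theorem commonNbhd_eq (c : Finset (Fin r × Fin t)) :
    commonNbhd (completeEquipartiteGraph r t) c = {v | v.1 ∉ c.image Prod.fst} := by
  ext v
  simp only [commonNbhd, completeEquipartiteGraph_adj, Set.mem_ofPred_eq, mem_image, not_exists,
    not_and]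

theorem card_image_fst_of_isNClique {u : ℕ} {c : Finset (Fin r × Fin t)}
    (hc : (completeEquipartiteGraph r t).IsNClique u c) : #(c.image Prod.fst) = u := by
  rw [card_image_of_injOn, hc.card_eq]
  intro x hx y hy hxy
  by_contra hne
  exact hc.isClique hx hy hne hxy

noncomputable def induceNotMemParts (s : Finset (Fin r)) :
    (completeEquipartiteGraph r t).induce {v | v.1 ∉ s} ≃g
      completeEquipartiteGraph (r - #s) t where
  toEquiv := (Equiv.prodSubtypeFstEquivSubtypeProd (p := (· ∉ s))).trans
    (Equiv.prodCongr (Fintype.equivFinOfCardEq (by simp)) (Equiv.refl _))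
  map_rel_iff' := by simp [Equiv.prodSubtypeFstEquivSubtypeProd, Subtype.ext_iff]

noncomputable def induceCommonNbhd (c : Finset (Fin r × Fin t)) :
    (completeEquipartiteGraph r t).induce (commonNbhd (completeEquipartiteGraph r t) c) ≃g
      completeEquipartiteGraph (r - #(c.image Prod.fst)) t :=
  (Iso.refl.induce (by rw [commonNbhd_eq]; exact Set.bijOn_id _)).trans (induceNotMemParts _)

end completeEquipartiteGraph

end SimpleGraph

theorem stmt6_general (u ω n : ℕ) (hω : 0 < ω) (hdvd : ω ∣ n)
    (c : Finset (Fin n)) (hc : (turanGraph n ω).IsNClique u c) :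
    Nonempty (((turanGraph n ω).induce (commonNbhd (turanGraph n ω) c)) ≃g
      turanGraph (n - u * (n / ω)) (ω - u)) := by
  obtain ⟨k, rfl⟩ := hdvd
  rw [Nat.mul_div_cancel_left k hω, ← Nat.sub_mul]
  let φ := (completeEquipartiteGraph.turanGraph (r := ω) (t := k)).symm
  let c' := c.map φ.toEquiv.toEmbedding
  have hparts : #(c'.image Prod.fst) = u :=
    completeEquipartiteGraph.card_image_fst_of_isNClique (φ.isNClique_map hc)
  subst hparts
  exact ⟨((φ.induce (φ.bijOn_commonNbhd c)).trans
    (completeEquipartiteGraph.induceCommonNbhd c')).trans completeEquipartiteGraph.turanGraph⟩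

/-- in `T_ω(n)` with `ω ∣ n`, the common neighborhood of any `u`-clique
induces a graph isomorphic to `T_{ω−u}(n − u·n/ω)`. -/
theorem stmt6 (u ω n : ℕ) (hω : 0 < ω) (hu : u ≤ ω) (hdvd : ω ∣ n)
    (c : Finset (Fin n)) (hc : (turanGraph n ω).IsNClique u c) :
    Nonempty (((turanGraph n ω).induce (commonNbhd (turanGraph n ω) c)) ≃g
      turanGraph (n - u * (n / ω)) (ω - u)) :=
  stmt6_general u ω n hω hdvd c hc
end

section
/- Let u ≥ 1, let H be a graph with dom(H) ≥ u, and let Δ ≥ ω with ω − u ≥ ω_0(H^{↓u}). If G is a graph containing neither K_u ∨ I_{Δ+1} nor K_{ω+1} as a subgraph, then N(H,G) ≤ N(H^{↓u}, T_{ω−u}(Δ)) · k^u(G) / C(dom(H), u). -/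
open SimpleGraph Finset Filter Topology

/-!
Double count the pairs `(J, c)` where `J` is a copy of `H` in `G` and `c` is a `u`-set of
dominating vertices of `J`; such a `c` is a `u`-clique of `G`. Every copy `J` lies in
`C(dom H, u)` pairs. For a fixed `u`-clique `c`, removing `c` from `J` leaves a copy of `H^{↓u}`
inside the common neighbourhood `N(c)`, and `J` is recovered from it because `c` is joined to
everything in `J`. Forbidding `K_u ∨ I_{Δ+1}` gives `|N(c)| ≤ Δ`, and forbidding `K_{ω+1}` makes
`G[N(c)]` `K_{ω-u+1}`-free, so the Turán hypothesis bounds the number of such `J` by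
`N(H^{↓u}, T_{ω-u}(Δ))`.
-/

section Copies

variable {β α α' : Type*} {G : SimpleGraph α} {G' : SimpleGraph α'}

lemma SimpleGraph.Subgraph.comap_map_of_injective (f : G →g G') (hf : Function.Injective f)
    (J : G.Subgraph) : (J.map f).comap f = J := by
  ext <;> simp [Relation.Map, hf.eq_iff, Set.preimage_image_eq _ hf, ← and_assoc,
    and_iff_right_of_imp (fun h : J.Adj _ _ => J.adj_sub h)]

lemma copyCount_le_of_copy [Finite α'] (H : SimpleGraph β) (f : G.Copy G') :
    _root_.copyCount H G ≤ _root_.copyCount H G' := by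
  refine Set.ncard_le_ncard_of_injOn (Subgraph.map f.toHom) (fun J ⟨e⟩ => ?_) ?_
  · exact ⟨(f.isoSubgraphMap J).symm.trans e⟩
  · exact Function.LeftInverse.injective (g := Subgraph.comap f.toHom)
      (Subgraph.comap_map_of_injective _ f.injective) |>.injOn

lemma copyCount_congr_right [Finite α] [Finite α'] (H : SimpleGraph β) (e : G ≃g G') :
    _root_.copyCount H G = _root_.copyCount H G' :=
  (copyCount_le_of_copy H e.toCopy).antisymm (copyCount_le_of_copy H e.symm.toCopy)

def turanGraphCopyOfLE {n m : ℕ} (r : ℕ) (hnm : n ≤ m) : (turanGraph n r).Copy (turanGraph m r) :=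
  ⟨⟨Fin.castLE hnm, fun hab => by simpa [turanGraph] using hab⟩, Fin.castLE_injective hnm⟩

lemma copyCount_le_copyCount_turanGraph_of_cliqueFree {W : Type*} [Finite W] (K : SimpleGraph β)
    {r : ℕ} (hTuran : ∀ (n : ℕ) (G' : SimpleGraph (Fin n)), G'.CliqueFree (r + 1) →
      _root_.copyCount K G' ≤ _root_.copyCount K (turanGraph n r))
    {G : SimpleGraph W} (hG : G.CliqueFree (r + 1)) :
    _root_.copyCount K G ≤ _root_.copyCount K (turanGraph (Nat.card W) r) := by
  let e : Fin (Nat.card W) ≃ W := (Finite.equivFin W).symm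
  rw [copyCount_congr_right K (Iso.comap e G).symm]
  exact hTuran _ _ (hG.comap (Iso.comap e G).isContained)

end Copies

section Dominating

variable {α β : Type*} {H : SimpleGraph α}

lemma adj_iff_ne_of_mem_domSet {v : α} (hv : v ∈ domSet H) (w : α) : H.Adj v w ↔ w ≠ v :=
  ⟨fun h => h.ne', hv w⟩

lemma SimpleGraph.Iso.mapsTo_domSet {H' : SimpleGraph β} (e : H ≃g H') :
    Set.MapsTo e (domSet H) (domSet H') := fun v hv w hw => by
  simpa using e.map_adj_iff.2 (hv (e.symm w) (by rintro rfl; simp at hw))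

lemma domCount_congr {H' : SimpleGraph β} (e : H ≃g H') : domCount H = domCount H' := by
  have himage : e '' domSet H = domSet H' :=
    (e.mapsTo_domSet.image_subset).antisymm fun w hw =>
      ⟨e.symm w, e.symm.mapsTo_domSet hw, e.apply_symm_apply w⟩
  rw [domCount, domCount, ← himage, Set.ncard_image_of_injective _ e.injective]

def autOfFixesOffDomSet (σ : Equiv.Perm α) (hσ : ∀ x ∉ domSet H, σ x = x) : H ≃g H where
  toEquiv := σ
  map_rel_iff' {a b} := by
    have hdom : ∀ {x}, x ∈ domSet H → σ x ∈ domSet H := fun {x} hx => by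
      by_contra hσx
      exact hσx (by rwa [σ.injective (hσ _ hσx)])
    by_cases ha : a ∈ domSet H
    · simp [adj_iff_ne_of_mem_domSet ha, adj_iff_ne_of_mem_domSet (hdom ha)]
    by_cases hb : b ∈ domSet H
    · rw [H.adj_comm, H.adj_comm a]
      simp [adj_iff_ne_of_mem_domSet hb, adj_iff_ne_of_mem_domSet (hdom hb)]
    simp [hσ a ha, hσ b hb]

lemma exists_iso_image_eq_of_subset_domSet [DecidableEq α] {S T : Finset α}
    (hS : ↑S ⊆ domSet H) (hT : ↑T ⊆ domSet H) (hST : S.card = T.card) :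
    ∃ σ : H ≃g H, S.image σ = T := by
  induction S using Finset.induction_on generalizing T with
  | empty => exact ⟨.refl, by simpa [eq_comm] using hST⟩
  | insert a S haS ih =>
    obtain ⟨b, hb⟩ : T.Nonempty := by rw [← Finset.card_pos, ← hST]; simp
    rw [Finset.coe_insert, Set.insert_subset_iff] at hS
    obtain ⟨σ, hσ⟩ := ih hS.2 (fun x hx => hT (Finset.mem_of_mem_erase hx))
      (by rw [Finset.card_erase_of_mem hb, ← hST, Finset.card_insert_of_notMem haS]; simp)
    have hσa : σ a ∉ T.erase b := by
      rw [← hσ, Finset.mem_image]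
      rintro ⟨x, hx, hxa⟩
      exact haS (σ.injective hxa ▸ hx)
    let τ : H ≃g H := autOfFixesOffDomSet (Equiv.swap (σ a) b) fun x hx =>
      Equiv.swap_apply_of_ne_of_ne (by rintro rfl; exact hx (σ.mapsTo_domSet hS.1))
        (by rintro rfl; exact hx (hT hb))
    have hτ : ∀ z ∈ T.erase b, τ z = z := fun z hz =>
      Equiv.swap_apply_of_ne_of_ne (by rintro rfl; exact hσa hz) (Finset.ne_of_mem_erase hz)
    refine ⟨σ.trans τ, ?_⟩
    calc (insert a S).image (σ.trans τ) = insert b ((S.image σ).image τ) := by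
          simp [Finset.image_insert, Finset.image_image, τ, autOfFixesOffDomSet]
      _ = insert b (T.erase b) := by
          rw [hσ, Finset.image_congr (g := id) hτ, Finset.image_id]
      _ = T := Finset.insert_erase hb

end Dominating

section SubgraphDominating

variable {α β : Type*} {G : SimpleGraph α} {H : SimpleGraph β} {J K : G.Subgraph} {c : Finset α}

lemma subDomSet_eq_image_domSet_coe (J : G.Subgraph) :
    subDomSet J = Subtype.val '' domSet J.coe := by
  ext v
  constructor
  · rintro ⟨hv, hdom⟩
    exact ⟨⟨v, hv⟩, fun w hw => hdom w w.2 (fun h => hw (Subtype.ext h)), rfl⟩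
  · rintro ⟨v, hv, rfl⟩
    exact ⟨v.2, fun w hw hne => hv ⟨w, hw⟩ (fun h => hne (congrArg Subtype.val h))⟩

lemma ncard_subDomSet (e : J.coe ≃g H) : (subDomSet J).ncard = domCount H := by
  rw [subDomSet_eq_image_domSet_coe, Set.ncard_image_of_injective _ Subtype.val_injective]
  exact domCount_congr e

lemma adj_iff_of_mem_subDomSet {v : α} (hv : v ∈ subDomSet J) (w : α) :
    J.Adj v w ↔ w ∈ J.verts ∧ w ≠ v :=
  ⟨fun h => ⟨J.edge_vert h.symm, (J.adj_sub h).ne'⟩, fun h => hv.2 w h.1 h.2⟩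

lemma isClique_of_subset_subDomSet {s : Set α} (hs : s ⊆ subDomSet J) : G.IsClique s :=
  fun _ hv w hw hne => J.adj_sub ((hs hv).2 w (hs hw).1 hne.symm)

lemma notMem_of_mem_commonNbhd {v : α} (hv : v ∈ commonNbhd G c) : v ∉ c :=
  fun hvc => G.irrefl (hv v hvc)

lemma mem_commonNbhd_of_subset_subDomSet (hc : ↑c ⊆ subDomSet J) {v : α} (hv : v ∈ J.verts)
    (hvc : v ∉ c) : v ∈ commonNbhd G c := fun x hx =>
  J.adj_sub ((hc hx).2 v hv (by rintro rfl; exact hvc hx))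

def restrictToCommonNbhd (c : Finset α) (J : G.Subgraph) :
    (G.induce (commonNbhd G c)).Subgraph :=
  J.comap (Embedding.induce _).toHom

lemma le_of_restrictToCommonNbhd_le (hJ : ↑c ⊆ subDomSet J) (hK : ↑c ⊆ subDomSet K)
    (hJK : restrictToCommonNbhd c J ≤ restrictToCommonNbhd c K) : J ≤ K := by
  have hverts : J.verts ⊆ K.verts := fun x hx => by
    by_cases hxc : x ∈ c
    · exact (hK hxc).1
    · exact hJK.1 (show (⟨x, mem_commonNbhd_of_subset_subDomSet hJ hx hxc⟩ : commonNbhd G c) ∈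
        (restrictToCommonNbhd c J).verts from hx)
  refine ⟨hverts, fun x y hxy => ?_⟩
  by_cases hxc : x ∈ c
  · exact (adj_iff_of_mem_subDomSet (hK hxc) y).2
      ⟨hverts (J.edge_vert hxy.symm), (J.adj_sub hxy).ne'⟩
  by_cases hyc : y ∈ c
  · exact ((adj_iff_of_mem_subDomSet (hK hyc) x).2
      ⟨hverts (J.edge_vert hxy), (J.adj_sub hxy).ne⟩).symm
  exact (hJK.2 (v := ⟨x, mem_commonNbhd_of_subset_subDomSet hJ (J.edge_vert hxy) hxc⟩)
    (w := ⟨y, mem_commonNbhd_of_subset_subDomSet hJ (J.edge_vert hxy.symm) hyc⟩)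
    ⟨J.adj_sub hxy, hxy⟩).2

lemma restrictToCommonNbhd_injOn (c : Finset α) :
    Set.InjOn (restrictToCommonNbhd (G := G) c) {J | ↑c ⊆ subDomSet J} :=
  fun _ hJ _ hK hJK =>
    (le_of_restrictToCommonNbhd_le hJ hK hJK.le).antisymm
      (le_of_restrictToCommonNbhd_le hK hJ hJK.ge)

def restrictToCommonNbhdIso (hc : ↑c ⊆ subDomSet J) :
    (restrictToCommonNbhd c J).coe ≃g J.coe.induce {v | ↑v ∉ c} where
  toFun x := ⟨⟨x.1.1, x.2⟩, notMem_of_mem_commonNbhd x.1.2⟩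
  invFun v := ⟨⟨v.1.1, mem_commonNbhd_of_subset_subDomSet hc v.1.2 v.2⟩, v.1.2⟩
  left_inv _ := rfl
  right_inv _ := rfl
  map_rel_iff' := (and_iff_right_of_imp fun h => J.adj_sub h).symm

lemma nonempty_iso_restrictToCommonNbhd (hc : ↑c ⊆ subDomSet J) (e : J.coe ≃g H) {D : Finset β}
    (hD : ↑D ⊆ domSet H) (hcard : D.card = c.card) :
    Nonempty ((restrictToCommonNbhd c J).coe ≃g H.induce (↑D)ᶜ) := by
  classical
  let c' : Finset J.verts := c.subtype (· ∈ J.verts)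
  have hc'card : c'.card = c.card := by
    rw [Finset.card_subtype, Finset.filter_true_of_mem fun x hx => (hc hx).1]
  have hc'dom : ↑(c'.image e) ⊆ domSet H := by
    rintro _ hy
    obtain ⟨v, hv, rfl⟩ := Finset.mem_image.1 hy
    refine e.mapsTo_domSet ?_
    have := hc (Finset.mem_subtype.1 hv)
    rw [subDomSet_eq_image_domSet_coe] at this
    obtain ⟨w, hw, hwv⟩ := this
    rwa [← Subtype.ext hwv]
  obtain ⟨σ, hσ⟩ := exists_iso_image_eq_of_subset_domSet hc'dom hD
    (by rw [hcard, Finset.card_image_of_injective _ e.injective, hc'card])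
  let ψ : J.coe ≃g H := e.trans σ
  have hψ : Set.BijOn ψ ↑c' ↑D := by
    rw [← hσ, Finset.image_image, Finset.coe_image]
    exact ψ.injective.injOn.bijOn_image
  have hcompl : (↑c' : Set J.verts)ᶜ = {v : J.verts | (v : α) ∉ c} := by
    ext v
    exact Finset.mem_subtype.not
  exact ⟨(restrictToCommonNbhdIso hc).trans (ψ.induce (hcompl ▸ hψ.compl ψ.bijective))⟩

lemma ncard_copies_le_copyCount_induce_commonNbhd [Finite α] {D : Finset β}
    (hD : ↑D ⊆ domSet H) (hcard : D.card = c.card) :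
    {J : G.Subgraph | Nonempty (J.coe ≃g H) ∧ ↑c ⊆ subDomSet J}.ncard ≤
      _root_.copyCount (H.induce (↑D)ᶜ) (G.induce (commonNbhd G c)) :=
  Set.ncard_le_ncard_of_injOn (restrictToCommonNbhd c)
    (fun _ ⟨⟨e⟩, hc⟩ => nonempty_iso_restrictToCommonNbhd hc e hD hcard)
    ((restrictToCommonNbhd_injOn c).mono fun _ hJ => hJ.2)

end SubgraphDominating

section Cliques

variable {α : Type*} {G : SimpleGraph α} {c : Finset α} {u : ℕ}

lemma contains_completeSplitGraph_of_subset_commonNbhd (hc : G.IsNClique u c) {M : Finset α}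
    (hM : ↑M ⊆ commonNbhd G c) {d : ℕ} (hMd : M.card = d) :
    Graph.Contains (completeSplitGraph u d) G := by
  let fc : Fin u ≃ c := (c.equivFinOfCardEq hc.2).symm
  let fM : Fin d ≃ M := (M.equivFinOfCardEq hMd).symm
  have hadj : ∀ i j, G.Adj (fc i) (fM j) := fun i j => hM (fM j).2 _ (fc i).2
  refine ⟨⟨Sum.elim (fun i => (fc i : α)) (fun j => (fM j : α)), ?_⟩,
    Function.Injective.sumElim (Subtype.val_injective.comp fc.injective)
      (Subtype.val_injective.comp fM.injective) fun i j => (hadj i j).ne⟩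
  rintro (i | i) (j | j) ⟨hne, hl⟩
  · exact hc.1 (fc i).2 (fc j).2 fun h => hne (congrArg Sum.inl (fc.injective (Subtype.ext h)))
  · exact hadj i j
  · exact (hadj j i).symm
  · simp at hl

lemma ncard_commonNbhd_le [Finite α] {Δ : ℕ}
    (hsplit : ¬ Graph.Contains (completeSplitGraph u (Δ + 1)) G) (hc : G.IsNClique u c) :
    (commonNbhd G c).ncard ≤ Δ := by
  by_contra! h
  have hfin := Set.toFinite (commonNbhd G c)
  obtain ⟨M, hM, hMcard⟩ := Finset.exists_subset_card_eq (s := hfin.toFinset) (n := Δ + 1)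
    (by rwa [← Set.ncard_eq_toFinset_card _ hfin])
  exact hsplit (contains_completeSplitGraph_of_subset_commonNbhd hc
    (fun x hx => hfin.mem_toFinset.1 (hM hx)) hMcard)

lemma cliqueFree_induce_commonNbhd {m : ℕ} (hc : G.IsNClique u c) (hG : G.CliqueFree (m + u)) :
    (G.induce (commonNbhd G c)).CliqueFree m := by
  classical
  intro s hs
  have hdisj : Disjoint (s.map (Function.Embedding.subtype _)) c := by
    refine Finset.disjoint_left.2 fun x hx hxc => ?_
    obtain ⟨y, -, rfl⟩ := Finset.mem_map.1 hx
    exact notMem_of_mem_commonNbhd y.2 hxc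
  refine hG (s.map (Function.Embedding.subtype _) ∪ c) ⟨?_, ?_⟩
  · rw [Finset.coe_union, IsClique, Set.pairwise_union]
    refine ⟨?_, hc.1, ?_⟩
    · simpa [isClique_induce_iff] using hs.1
    · rintro _ hx y hy -
      obtain ⟨x, -, rfl⟩ := Finset.mem_map.1 hx
      exact ⟨(x.2 y hy).symm, x.2 y hy⟩
  · rw [Finset.card_union_of_disjoint hdisj, Finset.card_map, hs.2, hc.2]

end Cliques

section DoubleCounting

variable {α β : Type*} [Finite α] {G : SimpleGraph α} {H : SimpleGraph β}

lemma choose_domCount_le_ncard_cliques_subset_subDomSet {J : G.Subgraph} (e : J.coe ≃g H)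
    (u : ℕ) :
    (domCount H).choose u ≤ {c : Finset α | G.IsNClique u c ∧ ↑c ⊆ subDomSet J}.ncard := by
  classical
  have hfin := Set.toFinite (subDomSet J)
  rw [← ncard_subDomSet e, Set.ncard_eq_toFinset_card _ hfin, ← Finset.card_powersetCard,
    ← Set.ncard_coe_finset]
  refine Set.ncard_le_ncard (fun c hc => ?_) (Set.toFinite _)
  rw [Finset.mem_coe, Finset.mem_powersetCard] at hc
  have hcJ : ↑c ⊆ subDomSet J := fun x hx => hfin.mem_toFinset.1 (hc.1 hx)
  exact ⟨⟨isClique_of_subset_subDomSet hcJ, hc.2⟩, hcJ⟩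

lemma choose_domCount_mul_copyCount_le (u B : ℕ)
    (hB : ∀ c : Finset α, G.IsNClique u c →
      {J : G.Subgraph | Nonempty (J.coe ≃g H) ∧ ↑c ⊆ subDomSet J}.ncard ≤ B) :
    (domCount H).choose u * _root_.copyCount H G ≤ B * kclique u G := by
  classical
  let copies := (Set.toFinite {J : G.Subgraph | Nonempty (J.coe ≃g H)}).toFinset
  let cliques := (Set.toFinite {c : Finset α | G.IsNClique u c}).toFinset
  let r (J : G.Subgraph) (c : Finset α) : Prop := ↑c ⊆ subDomSet J
  have hcopies : ∀ J ∈ copies, (domCount H).choose u ≤ (cliques.bipartiteAbove r J).card := by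
    intro J hJ
    obtain ⟨e⟩ := (Set.Finite.mem_toFinset _).1 hJ
    convert choose_domCount_le_ncard_cliques_subset_subDomSet e u using 1
    rw [← Set.ncard_coe_finset]
    congr 1
    ext c
    simp [cliques, r, Finset.bipartiteAbove]
  have hcliques : ∀ c ∈ cliques, (copies.bipartiteBelow r c).card ≤ B := by
    intro c hc
    convert hB c ((Set.Finite.mem_toFinset _).1 hc) using 1
    rw [← Set.ncard_coe_finset]
    congr 1
    ext J
    simp [copies, r, Finset.bipartiteBelow]
  have := Finset.card_mul_le_card_mul r hcopies hcliques
  rw [_root_.copyCount, kclique, Set.ncard_eq_toFinset_card _ (Set.toFinite _),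
    Set.ncard_eq_toFinset_card _ (Set.toFinite _)]
  linarith

end DoubleCounting

theorem stmt9_general {h : ℕ} (H : SimpleGraph (Fin h)) (u : ℕ)
    (D : Finset (Fin h)) (hD : ↑D ⊆ domSet H) (hDcard : D.card = u) (Δ ω : ℕ)
    (hTuran : ∀ r : ℕ, ω - u ≤ r → ∀ (n : ℕ) (G' : SimpleGraph (Fin n)),
      G'.CliqueFree (r + 1) →
        _root_.copyCount (H.induce ((↑D : Set (Fin h))ᶜ)) G' ≤
          _root_.copyCount (H.induce ((↑D : Set (Fin h))ᶜ)) (turanGraph n r))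
    {V : Type*} [Fintype V] (G : SimpleGraph V)
    (hsplit : ¬ Graph.Contains (completeSplitGraph u (Δ + 1)) G)
    (hclique : G.CliqueFree (ω + 1)) :
    (domCount H).choose u * _root_.copyCount H G ≤
      _root_.copyCount (H.induce ((↑D : Set (Fin h))ᶜ)) (turanGraph Δ (ω - u)) * kclique u G := by
  refine choose_domCount_mul_copyCount_le u _ fun c hc => ?_
  have hfree : (G.induce (commonNbhd G c)).CliqueFree (ω - u + 1) :=
    cliqueFree_induce_commonNbhd hc (hclique.mono (by omega))
  calc _ ≤ _root_.copyCount (H.induce (↑D)ᶜ) (G.induce (commonNbhd G c)) :=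
        ncard_copies_le_copyCount_induce_commonNbhd hD (hDcard.trans hc.2.symm)
    _ ≤ _root_.copyCount (H.induce (↑D)ᶜ) (turanGraph (commonNbhd G c).ncard (ω - u)) := by
        rw [← Nat.card_coe_set_eq]
        exact copyCount_le_copyCount_turanGraph_of_cliqueFree _ (hTuran _ le_rfl) hfree
    _ ≤ _ := copyCount_le_of_copy _ (turanGraphCopyOfLE _ (ncard_commonNbhd_le hsplit hc))

/-- the upper bound
`N(H,G) ≤ N(H^{↓u}, T_{ω−u}(Δ)) · k^u(G) / C(dom H, u)` for `{K_u ∨ I_{Δ+1}, K_{ω+1}}`-free `G`. -/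
theorem stmt9 {h : ℕ} (H : SimpleGraph (Fin h)) (u : ℕ) (hu : 1 ≤ u)
    (hdom : u ≤ domCount H) (D : Finset (Fin h)) (hD : ↑D ⊆ domSet H) (hDcard : D.card = u)
    (Δ ω : ℕ) (hΔω : ω ≤ Δ) (hωu : u ≤ ω)
    (hTuran : ∀ r : ℕ, ω - u ≤ r → ∀ (n : ℕ) (G' : SimpleGraph (Fin n)),
      G'.CliqueFree (r + 1) →
        _root_.copyCount (H.induce ((↑D : Set (Fin h))ᶜ)) G' ≤
          _root_.copyCount (H.induce ((↑D : Set (Fin h))ᶜ)) (turanGraph n r))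
    {V : Type*} [Fintype V] (G : SimpleGraph V)
    (hsplit : ¬ Graph.Contains (completeSplitGraph u (Δ + 1)) G)
    (hclique : G.CliqueFree (ω + 1)) :
    (domCount H).choose u * _root_.copyCount H G ≤
      _root_.copyCount (H.induce ((↑D : Set (Fin h))ᶜ)) (turanGraph Δ (ω - u)) * kclique u G :=
  stmt9_general H u D hD hDcard Δ ω hTuran G hsplit hclique
end
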